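/- Any two admissible partitions Y and Z of C^s have a least upper bound in the poset 𝔄: there exists an admissible partition T with Y ≤ T and Z ≤ T such that every admissible partition S with Y ≤ S and Z ≤ S satisfies T ≤ S. In particular the poset 𝔄 is directed. -/

import Mathlib

namespace BrinThompson

/-- A finite binary word. -/
abbrev Word : Type := List Bool

/-- A box in `C^s`, recorded as the tuple of binary words whose cylinders form the product. -/
abbrev Box (s : ℕ) : Type := Fin s → Word

/-- The box obtained from `b` by replacing its `i`-th word `u` by `u ++ [bit]`. -/
def expandBox {s : ℕ} (i : Fin s) (bit : Bool) (b : Box s) : Box s :=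
  Function.update b i (b i ++ [bit])

/-- `B` is obtained from `A` by a simple expansion of colour `i`: one box of `A` is replaced by
its two halves in direction `i`. -/
def SimpleExpansionC {s : ℕ} (i : Fin s) (A B : Finset (Box s)) : Prop :=
  ∃ b ∈ A, B = insert (expandBox i false b) (insert (expandBox i true b) (A.erase b))

/-- `B` is obtained from `A` by a simple expansion of some colour. -/
def SimpleExpansion {s : ℕ} (A B : Finset (Box s)) : Prop :=
  ∃ i : Fin s, SimpleExpansionC i A B

/-- `Expands A B` (`A ≤ B`): `B` is a descendant of `A`, i.e. `B` is obtained from `A` by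
finitely many simple expansions. -/
def Expands {s : ℕ} (A B : Finset (Box s)) : Prop :=
  Relation.ReflTransGen SimpleExpansion A B

/-- The one-element partition `{C^s}`. -/
def trivialPartition (s : ℕ) : Finset (Box s) := {fun _ => []}

/-- An admissible partition of `C^s`. -/
def Admissible {s : ℕ} (A : Finset (Box s)) : Prop :=
  Expands (trivialPartition s) A

/-- `M = glb_A(Ω)`: the greatest lower bound of `Ω` above `A`. -/
def IsGlbAbove {s : ℕ} (A : Finset (Box s)) (Ω : Set (Finset (Box s)))
    (M : Finset (Box s)) : Prop :=
  Admissible M ∧ Expands A M ∧ (∀ B ∈ Ω, Expands M B) ∧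
    ∀ N : Finset (Box s), Admissible N → Expands A N → (∀ B ∈ Ω, Expands N B) → Expands N M

/-- The depth of a box: the total length of its defining words. -/
def depth {s : ℕ} (b : Box s) : ℕ := ∑ i, (b i).length

/-- `BoxLE m b`: the box `m` contains the box `b`, i.e. each word of `m` is a prefix of the
corresponding word of `b`. -/
def BoxLE {s : ℕ} (m b : Box s) : Prop := ∀ i, m i <+: b i

/-- A box `y ∈ Y` is locally maximal with respect to `A`: for the box `m` of `A` containing `y`,
every box `j ∈ Y` contained in `m` satisfies `l(A,j) ≤ l(A,y)`, i.e. `depth j ≤ depth y`. -/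
def LocallyMaximal {s : ℕ} (A Y : Finset (Box s)) (y : Box s) : Prop :=
  ∀ m ∈ A, BoxLE m y → ∀ j ∈ Y, BoxLE m j → depth j ≤ depth y

/-- There is an edge of colour `i` between `y, y' ∈ Y` in the graph `Γ_A`: some simple
contraction `Z` of `Y` of colour `i` with `A ≤ Z` merges exactly `y` and `y'`. -/
def GammaAdjC {s : ℕ} (A Y : Finset (Box s)) (i : Fin s) (y y' : Box s) : Prop :=
  y ≠ y' ∧ y ∈ Y ∧ y' ∈ Y ∧
    ∃ Z : Finset (Box s), Admissible Z ∧ SimpleExpansionC i Z Y ∧ Expands A Z ∧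
      Y \ Z = {y, y'}

/-- The graph `Γ_A` (with its colours forgotten). -/
def Gamma {s : ℕ} (A Y : Finset (Box s)) : SimpleGraph (Box s) where
  Adj y y' := ∃ i : Fin s, GammaAdjC A Y i y y'
  symm := by
    refine ⟨?_⟩
    rintro y y' ⟨i, hne, hy, hy', Z, h1, h2, h3, h4⟩
    exact ⟨i, hne.symm, hy', hy, Z, h1, h2, h3, by rwa [Finset.pair_comm]⟩
  loopless := by refine ⟨?_⟩; rintro y ⟨i, hne, _⟩; exact hne rfl

/-- The geometric realization of the order complex (nerve) of the relation `le` on `P`: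
finitely supported probability densities on `P` whose support is a chain, topologised as a
subspace of `P → ℝ`. -/
abbrev OrderComplex (P : Type*) (le : P → P → Prop) : Type _ :=
  {f : P → ℝ // (Function.support f).Finite ∧ (∀ x, 0 ≤ f x) ∧
    IsChain le (Function.support f) ∧ ∑ᶠ x, f x = 1}

/-- A space is `t`-connected if it is nonempty, path-connected and its homotopy groups
`π_k` vanish for `1 ≤ k ≤ t`. -/
def TConnected (t : ℕ) (X : Type*) [TopologicalSpace X] : Prop :=
  Nonempty X ∧ PathConnectedSpace X ∧
    ∀ k : ℕ, 1 ≤ k → k ≤ t → ∀ x : X, Subsingleton (HomotopyGroup (Fin k) X x)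

/-! The least upper bound of `Y` and `Z` is their common refinement, made of the nonempty
intersections `y ∩ z` with `y ∈ Y`, `z ∈ Z`. Restricting each step of an expansion sequence to a
box `y` is either a simple expansion or does nothing, so the trace `Z ∩ y` of an admissible
partition on `y` descends from `{y}`; expanding the disjoint boxes of `Y` independently shows that
the common refinement descends from `Y`, and symmetrically from `Z`. Conversely, an admissible
partition `S` all of whose boxes lie in boxes of a partition `T` is the union of its traces on the
boxes of `T`, hence descends from `T`; a common descendant of `Y` and `Z` is such a partition for
`T` the common refinement. -/

section Boxes

variable {s : ℕ}

/-- The cylinders `[u]` and `[v]` meet iff `u` and `v` are prefix-comparable, hence two boxes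
meet iff they do so coordinatewise. -/
def Meets (y z : Box s) : Prop := ∀ i, y i <+: z i ∨ z i <+: y i

instance (y : Box s) : DecidablePred (Meets y) :=
  fun z => inferInstanceAs (Decidable (∀ i, y i <+: z i ∨ z i <+: y i))

theorem meets_refl (y : Box s) : Meets y y := fun _ => Or.inl (List.prefix_refl _)

theorem Meets.symm {y z : Box s} (h : Meets y z) : Meets z y := fun i => (h i).symm

theorem BoxLE.refl (y : Box s) : BoxLE y y := fun _ => List.prefix_refl _

theorem BoxLE.trans {a b c : Box s} (h₁ : BoxLE a b) (h₂ : BoxLE b c) : BoxLE a c :=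
  fun i => (h₁ i).trans (h₂ i)

theorem BoxLE.meets {y z : Box s} (h : BoxLE y z) : Meets y z := fun i => Or.inl (h i)

theorem meets_of_boxLE_of_boxLE {y z x : Box s} (hy : BoxLE y x) (hz : BoxLE z x) :
    Meets y z :=
  fun i => List.prefix_or_prefix_of_prefix (hy i) (hz i)

theorem Meets.mono_left {a x c : Box s} (h : BoxLE a x) (hc : Meets x c) : Meets a c := by
  intro i
  rcases hc i with hxc | hcx
  · exact Or.inl ((h i).trans hxc)
  · exact List.prefix_or_prefix_of_prefix (h i) hcx

/-- The box `y ∩ z` when `y` and `z` meet (junk otherwise). -/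
def boxInter (y z : Box s) : Box s := fun i => if (y i).length ≤ (z i).length then z i else y i

theorem boxLE_boxInter_left {y z : Box s} (h : Meets y z) : BoxLE y (boxInter y z) := by
  intro i
  unfold boxInter
  split_ifs with hl
  · rcases h i with hyz | hzy
    · exact hyz
    · rw [hzy.eq_of_length_le hl]
  · exact List.prefix_refl _

theorem boxInter_comm {y z : Box s} (h : Meets y z) : boxInter y z = boxInter z y := by
  funext i
  have key : ∀ {u v : Word}, u <+: v → (if u.length ≤ v.length then v else u) =
      if v.length ≤ u.length then u else v := fun huv => by
    rw [if_pos huv.length_le]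
    split_ifs with hvu
    · exact (huv.eq_of_length_le hvu).symm
    · rfl
  rcases h i with hyz | hzy
  · exact key hyz
  · exact (key hzy).symm

theorem boxLE_boxInter_right {y z : Box s} (h : Meets y z) : BoxLE z (boxInter y z) :=
  boxInter_comm h ▸ boxLE_boxInter_left h.symm

theorem boxInter_eq_right {y z : Box s} (h : BoxLE y z) : boxInter y z = z :=
  funext fun i => if_pos (h i).length_le

theorem boxInter_boxLE {y z x : Box s} (hy : BoxLE y x) (hz : BoxLE z x) :
    BoxLE (boxInter y z) x := by
  intro i
  unfold boxInter
  split_ifs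
  · exact hz i
  · exact hy i

theorem boxInter_update (y b : Box s) (i : Fin s) (w : Word) :
    boxInter y (Function.update b i w) =
      Function.update (boxInter y b) i (if (y i).length ≤ w.length then w else y i) := by
  funext k
  rcases eq_or_ne k i with rfl | hk
  · simp [boxInter]
  · simp [boxInter, hk]

theorem expandBox_apply_self (i : Fin s) (ε : Bool) (b : Box s) :
    expandBox i ε b i = b i ++ [ε] := by
  simp [expandBox]

theorem expandBox_apply_ne {i k : Fin s} (hk : k ≠ i) (ε : Bool) (b : Box s) :
    expandBox i ε b k = b k :=
  Function.update_of_ne hk _ _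

theorem boxLE_expandBox (i : Fin s) (ε : Bool) (b : Box s) : BoxLE b (expandBox i ε b) := by
  intro k
  rcases eq_or_ne k i with rfl | hk
  · rw [expandBox_apply_self]
    exact List.prefix_append _ _
  · rw [expandBox_apply_ne hk]

theorem Meets.of_expandBox_right {y b : Box s} {i : Fin s} {ε : Bool}
    (h : Meets y (expandBox i ε b)) : Meets y b := by
  intro k
  rcases eq_or_ne k i with rfl | hk
  · have hk := h k
    rw [expandBox_apply_self, List.prefix_concat_iff] at hk
    rcases hk with (hyb | hyb) | hby
    · exact Or.inr (hyb ▸ List.prefix_append _ _)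
    · exact Or.inl hyb
    · exact Or.inr ((List.prefix_append _ _).trans hby)
  · simpa only [expandBox_apply_ne hk] using h k

theorem meets_expandBox {y b : Box s} {i : Fin s} {ε : Bool} (h : Meets y b)
    (hi : y i <+: b i ++ [ε] ∨ b i ++ [ε] <+: y i) : Meets y (expandBox i ε b) := by
  intro k
  rcases eq_or_ne k i with rfl | hk
  · rwa [expandBox_apply_self]
  · rw [expandBox_apply_ne hk]
    exact h k

theorem exists_concat_prefix {u w : Word} (h : u <+: w) (hne : ¬ w <+: u) :
    ∃ ε, u ++ [ε] <+: w := by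
  obtain ⟨_ | ⟨ε, t⟩, rfl⟩ := h
  · simp at hne
  · exact ⟨ε, t, by simp⟩

theorem eq_of_concat_prefix {u w : Word} {a c : Bool} (ha : u ++ [a] <+: w)
    (hc : w <+: u ++ [c] ∨ u ++ [c] <+: w) : a = c := by
  have hac : u ++ [a] <+: u ++ [c] := by
    rcases hc with hwc | hcw
    · exact ha.trans hwc
    · exact List.prefix_of_prefix_length_le ha hcw (by simp)
  simpa using hac.eq_of_length (by simp)

theorem not_meets_expandBox_expandBox (i : Fin s) (b : Box s) :
    ¬ Meets (expandBox i false b) (expandBox i true b) := by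
  intro h
  simpa [expandBox] using h i

end Boxes

section Partitions

variable {s : ℕ}

def BoxesDisjoint (A : Finset (Box s)) : Prop :=
  (A : Set (Box s)).Pairwise fun a b => ¬ Meets a b

def Refines (B A : Finset (Box s)) : Prop := ∀ x ∈ B, ∃ a ∈ A, BoxLE a x

theorem boxesDisjoint_trivialPartition : BoxesDisjoint (trivialPartition s) := by
  simp [BoxesDisjoint, trivialPartition]

theorem BoxesDisjoint.simpleExpansion {A B : Finset (Box s)} (hA : BoxesDisjoint A)
    (h : SimpleExpansion A B) : BoxesDisjoint B := by
  obtain ⟨i, b, hb, rfl⟩ := h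
  have hhalf : ∀ ε, ∀ a ∈ A.erase b, ¬ Meets (expandBox i ε b) a := fun ε a ha hm =>
    hA (Finset.mem_of_mem_erase ha) hb (Finset.ne_of_mem_erase ha) hm.symm.of_expandBox_right
  have hhalves : ¬ Meets (expandBox i false b) (expandBox i true b) :=
    not_meets_expandBox_expandBox i b
  intro x hx y hy hxy hm
  simp only [Finset.coe_insert, Set.mem_insert_iff, Finset.mem_coe] at hx hy
  rcases hx with rfl | rfl | hx <;> rcases hy with rfl | rfl | hy
  all_goals first
    | exact hxy rfl
    | exact hhalves hm
    | exact hhalves hm.symm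
    | exact hhalf _ _ hy hm
    | exact hhalf _ _ hx hm.symm
    | exact hA (Finset.mem_of_mem_erase hx) (Finset.mem_of_mem_erase hy) hxy hm

theorem BoxesDisjoint.expands {A B : Finset (Box s)} (hA : BoxesDisjoint A) (h : Expands A B) :
    BoxesDisjoint B := by
  induction h with
  | refl => exact hA
  | tail _ hstep ih => exact ih.simpleExpansion hstep

theorem Admissible.boxesDisjoint {A : Finset (Box s)} (h : Admissible A) : BoxesDisjoint A :=
  boxesDisjoint_trivialPartition.expands h

theorem Admissible.expands {A B : Finset (Box s)} (hA : Admissible A) (h : Expands A B) :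
    Admissible B :=
  Relation.ReflTransGen.trans hA h

theorem Expands.refines {A B : Finset (Box s)} (h : Expands A B) : Refines B A := by
  induction h with
  | refl => exact fun x hx => ⟨x, hx, BoxLE.refl x⟩
  | tail _ hstep ih =>
    obtain ⟨i, b, hb, rfl⟩ := hstep
    intro x hx
    simp only [Finset.mem_insert] at hx
    rcases hx with rfl | rfl | hx
    · obtain ⟨a, ha, hab⟩ := ih b hb
      exact ⟨a, ha, hab.trans (boxLE_expandBox i false b)⟩
    · obtain ⟨a, ha, hab⟩ := ih b hb
      exact ⟨a, ha, hab.trans (boxLE_expandBox i true b)⟩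
    · exact ih x (Finset.mem_of_mem_erase hx)

theorem Expands.union_right {A B : Finset (Box s)} (h : Expands A B) (C : Finset (Box s))
    (hAC : ∀ a ∈ A, ∀ c ∈ C, ¬ Meets a c) : Expands (A ∪ C) (B ∪ C) := by
  induction h using Relation.ReflTransGen.head_induction_on with
  | refl => exact Relation.ReflTransGen.refl
  | head hstep _ ih =>
    obtain ⟨i, b, hb, rfl⟩ := hstep
    have hbC : b ∉ C := fun hbC => hAC b hb b hbC (meets_refl b)
    refine Relation.ReflTransGen.head ⟨i, b, Finset.mem_union_left _ hb, ?_⟩ (ih ?_)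
    · rw [Finset.erase_union_distrib, Finset.erase_eq_of_notMem hbC,
        ← Finset.insert_union, ← Finset.insert_union]
    · intro x hx c hc hm
      simp only [Finset.mem_insert] at hx
      rcases hx with rfl | rfl | hx
      · exact hAC b hb c hc (hm.mono_left (boxLE_expandBox i false b))
      · exact hAC b hb c hc (hm.mono_left (boxLE_expandBox i true b))
      · exact hAC x (Finset.mem_of_mem_erase hx) c hc hm

theorem expands_biUnion {Y : Finset (Box s)} (hY : BoxesDisjoint Y)
    (F : Box s → Finset (Box s)) (hF : ∀ y ∈ Y, Expands {y} (F y)) :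
    Expands Y (Y.biUnion F) := by
  induction Y using Finset.induction_on with
  | empty => exact Relation.ReflTransGen.refl
  | @insert y Y hyY ih =>
    have hY' : BoxesDisjoint Y := hY.mono (by simp)
    have hy_apart : ∀ a ∈ Y, ¬ Meets a y := fun a ha =>
      hY (by simp [ha]) (by simp) (fun h => hyY (h ▸ ha))
    have hFy : Expands {y} (F y) := hF y (Finset.mem_insert_self _ _)
    have expand_y : Expands ({y} ∪ Y) (F y ∪ Y) :=
      hFy.union_right Y (by simpa using fun c hc hm => hy_apart c hc hm.symm)
    have expand_rest : Expands (Y ∪ F y) (Y.biUnion F ∪ F y) := by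
      refine (ih hY' fun z hz => hF z (Finset.mem_insert_of_mem hz)).union_right _ ?_
      intro a ha c hc hm
      obtain ⟨_, hy, hyc⟩ := hFy.refines c hc
      rw [Finset.mem_singleton] at hy
      exact hy_apart a ha (hy ▸ hm.symm.mono_left hyc).symm
    rw [Finset.biUnion_insert, Finset.union_comm (F y), Finset.insert_eq]
    rw [Finset.union_comm (F y)] at expand_y
    exact expand_y.trans expand_rest

end Partitions

section Traces

variable {s : ℕ}

def traceOn (A : Finset (Box s)) (y : Box s) : Finset (Box s) :=
  (A.filter (Meets y)).image (boxInter y)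

theorem mem_traceOn {A : Finset (Box s)} {y x : Box s} :
    x ∈ traceOn A y ↔ ∃ a ∈ A, Meets y a ∧ boxInter y a = x := by
  simp [traceOn, and_assoc]

theorem boxInter_mem_traceOn {A : Finset (Box s)} {y b : Box s} (hb : b ∈ A) (h : Meets y b) :
    boxInter y b ∈ traceOn A y :=
  mem_traceOn.mpr ⟨b, hb, h, rfl⟩

theorem traceOn_trivialPartition (y : Box s) : traceOn (trivialPartition s) y = {y} := by
  have hle : BoxLE (fun _ => []) y := fun _ => List.nil_prefix
  rw [traceOn, trivialPartition, Finset.filter_singleton, if_pos hle.meets.symm,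
    Finset.image_singleton, boxInter_comm hle.meets.symm, boxInter_eq_right hle]

theorem traceOn_insert_of_meets {A : Finset (Box s)} {y c : Box s} (h : Meets y c) :
    traceOn (insert c A) y = insert (boxInter y c) (traceOn A y) := by
  simp [traceOn, Finset.filter_insert, h]

theorem traceOn_insert_of_not_meets {A : Finset (Box s)} {y c : Box s} (h : ¬ Meets y c) :
    traceOn (insert c A) y = traceOn A y := by
  simp [traceOn, Finset.filter_insert, h]

theorem traceOn_erase_of_not_meets {A : Finset (Box s)} {y b : Box s} (h : ¬ Meets y b) :
    traceOn (A.erase b) y = traceOn A y := by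
  rw [traceOn, Finset.filter_erase, Finset.erase_eq_of_notMem (by simp [h]), traceOn]

theorem traceOn_erase {A : Finset (Box s)} (hA : BoxesDisjoint A) {y b : Box s} (hb : b ∈ A)
    (h : Meets y b) : traceOn (A.erase b) y = (traceOn A y).erase (boxInter y b) := by
  ext x
  simp only [mem_traceOn, Finset.mem_erase]
  constructor
  · rintro ⟨a, ⟨hab, ha⟩, hya, rfl⟩
    refine ⟨fun heq => hA ha hb hab ?_, a, ha, hya, rfl⟩
    exact meets_of_boxLE_of_boxLE (boxLE_boxInter_right hya) (heq ▸ boxLE_boxInter_right h)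
  · rintro ⟨hne, a, ha, hya, rfl⟩
    exact ⟨a, ⟨fun hab => hne (hab ▸ rfl), ha⟩, hya, rfl⟩

theorem boxInter_expandBox_of_prefix {y b : Box s} {i : Fin s} (ε : Bool) (hi : y i <+: b i) :
    boxInter y (expandBox i ε b) = expandBox i ε (boxInter y b) := by
  have hib : boxInter y b i = b i := if_pos hi.length_le
  rw [expandBox, boxInter_update, if_pos (by simpa using hi.length_le.trans (Nat.le_succ _)),
    expandBox, hib]

theorem boxInter_expandBox_of_concat_prefix {y b : Box s} {i : Fin s} {ε : Bool}
    (hi : b i ++ [ε] <+: y i) : boxInter y (expandBox i ε b) = boxInter y b := by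
  have hlt : (b i).length < (y i).length := by simpa using hi.length_le
  have hiy : boxInter y b i = y i := if_neg (by omega)
  rw [expandBox, boxInter_update, Function.update_eq_self_iff, hiy]
  split_ifs with hle
  · exact hi.eq_of_length_le hle
  · rfl

theorem insert_expandBox_comm (i : Fin s) (ε : Bool) (b : Box s) (X : Finset (Box s)) :
    insert (expandBox i false b) (insert (expandBox i true b) X) =
      insert (expandBox i ε b) (insert (expandBox i (!ε) b) X) := by
  cases ε
  · rfl
  · exact Finset.insert_comm _ _ _

theorem traceOn_expand_of_prefix {A : Finset (Box s)} (hA : BoxesDisjoint A) {y b : Box s}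
    {i : Fin s} (hb : b ∈ A) (hyb : Meets y b) (hi : y i <+: b i) :
    traceOn (insert (expandBox i false b) (insert (expandBox i true b) (A.erase b))) y =
      insert (expandBox i false (boxInter y b))
        (insert (expandBox i true (boxInter y b)) ((traceOn A y).erase (boxInter y b))) := by
  have hhalf (ε : Bool) : Meets y (expandBox i ε b) :=
    meets_expandBox hyb (Or.inl (hi.trans (List.prefix_append _ _)))
  rw [traceOn_insert_of_meets (hhalf false), traceOn_insert_of_meets (hhalf true),
    traceOn_erase hA hb hyb, boxInter_expandBox_of_prefix _ hi, boxInter_expandBox_of_prefix _ hi]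

theorem traceOn_expand_of_concat_prefix {A : Finset (Box s)} (hA : BoxesDisjoint A)
    {y b : Box s} {i : Fin s} {ε : Bool} (hb : b ∈ A) (hyb : Meets y b)
    (hi : b i ++ [ε] <+: y i) :
    traceOn (insert (expandBox i false b) (insert (expandBox i true b) (A.erase b))) y =
      traceOn A y := by
  have hother : ¬ Meets y (expandBox i (!ε) b) := fun h =>
    Bool.self_ne_not ε (eq_of_concat_prefix hi (by simpa [expandBox_apply_self] using h i))
  rw [insert_expandBox_comm i ε, traceOn_insert_of_meets (meets_expandBox hyb (Or.inr hi)),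
    traceOn_insert_of_not_meets hother, traceOn_erase hA hb hyb,
    boxInter_expandBox_of_concat_prefix hi, Finset.insert_erase (boxInter_mem_traceOn hb hyb)]

theorem traceOn_expand_of_not_meets {A : Finset (Box s)} {y b : Box s} {i : Fin s}
    (hyb : ¬ Meets y b) :
    traceOn (insert (expandBox i false b) (insert (expandBox i true b) (A.erase b))) y =
      traceOn A y := by
  rw [traceOn_insert_of_not_meets (fun h => hyb h.of_expandBox_right),
    traceOn_insert_of_not_meets (fun h => hyb h.of_expandBox_right), traceOn_erase_of_not_meets hyb]

/-- On the box `y`, splitting `b` in direction `i` splits `y ∩ b` if `y i` is a prefix of `b i`;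
otherwise `y` lies in one half of `b` or misses `b`, and the trace does not change. -/
theorem BoxesDisjoint.expands_traceOn_of_simpleExpansion {A B : Finset (Box s)}
    (hA : BoxesDisjoint A) (h : SimpleExpansion A B) (y : Box s) :
    Expands (traceOn A y) (traceOn B y) := by
  obtain ⟨i, b, hb, rfl⟩ := h
  by_cases hyb : Meets y b
  · by_cases hi : y i <+: b i
    · rw [traceOn_expand_of_prefix hA hb hyb hi]
      exact .single ⟨i, _, boxInter_mem_traceOn hb hyb, rfl⟩
    · obtain ⟨ε, hε⟩ := exists_concat_prefix ((hyb i).resolve_left hi) hi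
      rw [traceOn_expand_of_concat_prefix hA hb hyb hε]
      exact .refl
  · rw [traceOn_expand_of_not_meets hyb]
    exact .refl

theorem BoxesDisjoint.expands_traceOn {A B : Finset (Box s)} (hA : BoxesDisjoint A)
    (h : Expands A B) (y : Box s) : Expands (traceOn A y) (traceOn B y) := by
  induction h with
  | refl => exact .refl
  | tail hAC hstep ih => exact ih.trans ((hA.expands hAC).expands_traceOn_of_simpleExpansion hstep y)

theorem Admissible.expands_traceOn {Z : Finset (Box s)} (hZ : Admissible Z) (y : Box s) :
    Expands {y} (traceOn Z y) :=
  traceOn_trivialPartition y ▸ boxesDisjoint_trivialPartition.expands_traceOn hZ y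

end Traces

section CommonRefinement

variable {s : ℕ}

theorem biUnion_traceOn_of_refines {S T : Finset (Box s)} (hT : BoxesDisjoint T)
    (h : Refines S T) : T.biUnion (traceOn S) = S := by
  ext x
  simp only [Finset.mem_biUnion, mem_traceOn]
  constructor
  · rintro ⟨t, ht, c, hc, htc, rfl⟩
    obtain ⟨t', ht', ht'c⟩ := h c hc
    obtain rfl : t' = t := by
      by_contra hne
      exact hT ht' ht hne (htc.symm.mono_left ht'c)
    rwa [boxInter_eq_right ht'c]
  · intro hx
    obtain ⟨t, ht, htx⟩ := h x hx
    exact ⟨t, ht, x, hx, htx.meets, boxInter_eq_right htx⟩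

theorem expands_of_refines {S T : Finset (Box s)} (hT : BoxesDisjoint T) (hS : Admissible S)
    (h : Refines S T) : Expands T S :=
  biUnion_traceOn_of_refines hT h ▸ expands_biUnion hT _ fun t _ => hS.expands_traceOn t

def commonRefinement (Y Z : Finset (Box s)) : Finset (Box s) := Y.biUnion (traceOn Z)

theorem mem_commonRefinement {Y Z : Finset (Box s)} {x : Box s} :
    x ∈ commonRefinement Y Z ↔ ∃ y ∈ Y, ∃ z ∈ Z, Meets y z ∧ boxInter y z = x := by
  simp only [commonRefinement, Finset.mem_biUnion, mem_traceOn]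

theorem commonRefinement_comm (Y Z : Finset (Box s)) :
    commonRefinement Y Z = commonRefinement Z Y := by
  ext x
  simp only [mem_commonRefinement]
  constructor <;>
  · rintro ⟨y, hy, z, hz, hyz, rfl⟩
    exact ⟨z, hz, y, hy, hyz.symm, (boxInter_comm hyz).symm⟩

theorem expands_commonRefinement {Y Z : Finset (Box s)} (hY : BoxesDisjoint Y)
    (hZ : Admissible Z) : Expands Y (commonRefinement Y Z) :=
  expands_biUnion hY _ fun y _ => hZ.expands_traceOn y

theorem Refines.commonRefinement {S Y Z : Finset (Box s)} (hY : Refines S Y) (hZ : Refines S Z) :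
    Refines S (commonRefinement Y Z) := by
  intro x hx
  obtain ⟨y, hy, hyx⟩ := hY x hx
  obtain ⟨z, hz, hzx⟩ := hZ x hx
  have hyz := meets_of_boxLE_of_boxLE hyx hzx
  exact ⟨boxInter y z, mem_commonRefinement.mpr ⟨y, hy, z, hz, hyz, rfl⟩, boxInter_boxLE hyx hzx⟩

end CommonRefinement

theorem exists_least_upper_bound_general (s : ℕ)
    (Y Z : Finset (Box s)) (hY : Admissible Y) (hZ : Admissible Z) :
    ∃ T : Finset (Box s), Admissible T ∧ Expands Y T ∧ Expands Z T ∧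
      ∀ S : Finset (Box s), Admissible S → Expands Y S → Expands Z S → Expands T S := by
  have hYT : Expands Y (commonRefinement Y Z) := expands_commonRefinement hY.boxesDisjoint hZ
  have hZT : Expands Z (commonRefinement Y Z) :=
    commonRefinement_comm Z Y ▸ expands_commonRefinement hZ.boxesDisjoint hY
  have hT : Admissible (commonRefinement Y Z) := hY.expands hYT
  refine ⟨commonRefinement Y Z, hT, hYT, hZT, fun S hS hYS hZS => ?_⟩
  exact expands_of_refines hT.boxesDisjoint hS (hYS.refines.commonRefinement hZS.refines)

/-- any two admissible partitions of `C^s` have a least upper bound in the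
poset `𝔄`; in particular `𝔄` is directed. -/
theorem exists_least_upper_bound (s : ℕ) (hs : 1 ≤ s)
    (Y Z : Finset (Box s)) (hY : Admissible Y) (hZ : Admissible Z) :
    ∃ T : Finset (Box s), Admissible T ∧ Expands Y T ∧ Expands Z T ∧
      ∀ S : Finset (Box s), Admissible S → Expands Y S → Expands Z S → Expands T S :=
  exists_least_upper_bound_general s Y Z hY hZ

end BrinThompson
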